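/- Let λ ≤ 0, 0 < s₁ < s₂ < 2, and suppose u_λ ∈ X satisfies A(u_λ) = B(u_λ) + λC(u_λ) with B(u_λ) > 0 (i.e., u_λ lies on the Nehari manifold of I_λ). Set t₀ = (A(u_λ)/B(u_λ))^{1/(4−2s₁)}. Then I_λ(u_λ) ≥ I_λ(t₀u_λ) ≥ I_0(t₀u_λ) = ((2−s₁)/(6−2s₁)) · A(u_λ)^{(3−s₁)/(2−s₁)} / B(u_λ)^{1/(2−s₁)} ≥ ((2−s₁)/(6−2s₁)) S₁^{(3−s₁)/(2−s₁)}, where S₁ is the best constant with B(u)^{1/(3−s₁)} ≤ S₁^{-1}A(u). -/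

import Mathlib

/-!
On the Nehari manifold `A = B + λC` the fibering map `I(t) = t²A/2 − tᵃB/a − λtᵇC/b`
(`a = 6 − 2s₁ > b = 6 − 2s₂ > 2`) is maximal at `t = 1`: with `φ_q = (t^q − 1)/q`, which is
increasing in `q` by Bernoulli's inequality, `I(1) − I(t) = A(φ_b − φ_2) + B(φ_a − φ_b) ≥ 0`.
For `λ ≤ 0` dropping the `C`-term only lowers `I`; the remaining single-power map has the closed
form `(2−s₁)/(6−2s₁) · A·t₀²` at its critical point `t₀`, and the Sobolev inequality
`S₁ B^{1/(3−s₁)} ≤ A` raised to the power `(3−s₁)/(2−s₁)` bounds it from below.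
-/

open Real Set

theorem Real.monotoneOn_rpow_sub_one_div {t : ℝ} (ht : 0 ≤ t) :
    MonotoneOn (fun q : ℝ => (t ^ q - 1) / q) (Ioi 0) := by
  intro b (hb : 0 < b) a (ha : 0 < a) hba
  have hbern := one_add_mul_self_le_rpow_one_add (s := t ^ b - 1) (p := a / b)
    (by linarith [rpow_nonneg ht b]) ((one_le_div hb).2 hba)
  rw [add_sub_cancel, ← rpow_mul ht, mul_div_cancel₀ _ hb.ne'] at hbern
  rw [div_le_div_iff₀ hb ha]
  calc (t ^ b - 1) * a = b * (a / b * (t ^ b - 1)) := by field_simp [hb.ne']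
    _ ≤ b * (t ^ a - 1) := by gcongr; linarith
    _ = (t ^ a - 1) * b := mul_comm _ _

theorem nehari_fibering_le {A B C lam a b t : ℝ} (hA : 0 ≤ A) (hB : 0 ≤ B) (ht : 0 ≤ t)
    (h2b : 2 ≤ b) (hba : b ≤ a) (hnehari : A = B + lam * C) :
    t ^ 2 * A / 2 - t ^ a * B / a - lam * t ^ b * C / b ≤ A / 2 - B / a - lam * C / b := by
  have hpos : (0 : ℝ) < 2 := two_pos
  have hφ2b : (t ^ 2 - 1) / 2 ≤ (t ^ b - 1) / b := by
    simpa only [rpow_two] using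
      monotoneOn_rpow_sub_one_div ht (mem_Ioi.2 hpos) (mem_Ioi.2 (hpos.trans_le h2b)) h2b
  have hφba : (t ^ b - 1) / b ≤ (t ^ a - 1) / a :=
    monotoneOn_rpow_sub_one_div ht (mem_Ioi.2 (hpos.trans_le h2b))
      (mem_Ioi.2 (hpos.trans_le (h2b.trans hba))) hba
  have hdiff : A / 2 - B / a - lam * C / b - (t ^ 2 * A / 2 - t ^ a * B / a - lam * t ^ b * C / b)
      = A * ((t ^ b - 1) / b - (t ^ 2 - 1) / 2) + B * ((t ^ a - 1) / a - (t ^ b - 1) / b) := by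
    linear_combination (-((t ^ b - 1) / b)) * hnehari
  have := add_nonneg (mul_nonneg hA (sub_nonneg.2 hφ2b)) (mul_nonneg hB (sub_nonneg.2 hφba))
  linarith

theorem single_power_fibering_eq {A B s t : ℝ} (hA : 0 < A) (hB : 0 < B) (hs : s < 2)
    (ht : t = (A / B) ^ (1 / (4 - 2 * s))) :
    t ^ 2 * A / 2 - t ^ (6 - 2 * s) * B / (6 - 2 * s)
      = ((2 - s) / (6 - 2 * s)) * A ^ ((3 - s) / (2 - s)) / B ^ (1 / (2 - s)) := by
  have h2s : 2 - s ≠ 0 := by linarith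
  have h4s : 4 - 2 * s ≠ 0 := by linarith
  have h6s : 6 - 2 * s ≠ 0 := by linarith
  have hr : 0 < A / B := div_pos hA hB
  have ht_pos : 0 < t := ht ▸ rpow_pos_of_pos hr _
  have ht2 : t ^ 2 = (A / B) ^ (1 / (2 - s)) := by
    rw [ht, ← rpow_mul_natCast hr.le]
    congr 1
    field_simp
    ring
  have htq : t ^ (4 - 2 * s) = A / B := by
    rw [ht, one_div, rpow_inv_rpow hr.le h4s]
  have hta : t ^ (6 - 2 * s) = t ^ 2 * (A / B) := by
    rw [show 6 - 2 * s = 2 + (4 - 2 * s) by ring, rpow_add ht_pos, rpow_two, htq]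
  have hApow : A ^ ((3 - s) / (2 - s)) = A * A ^ (1 / (2 - s)) := by
    rw [show (3 - s) / (2 - s) = 1 + 1 / (2 - s) by field_simp; ring, rpow_add hA, rpow_one]
  rw [hta, hApow, ht2, div_rpow hA.le hB.le]
  field_simp
  ring

theorem rpow_le_of_sobolev {A B S s : ℝ} (hB : 0 < B) (hS : 0 < S) (hs : s < 2)
    (hSob : B ^ (1 / (3 - s)) ≤ S⁻¹ * A) :
    S ^ ((3 - s) / (2 - s)) ≤ A ^ ((3 - s) / (2 - s)) / B ^ (1 / (2 - s)) := by
  have hSB : S * B ^ (1 / (3 - s)) ≤ A := (le_inv_mul_iff₀ hS).1 hSob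
  rw [le_div_iff₀ (rpow_pos_of_pos hB _)]
  calc S ^ ((3 - s) / (2 - s)) * B ^ (1 / (2 - s))
      = (S * B ^ (1 / (3 - s))) ^ ((3 - s) / (2 - s)) := by
        rw [mul_rpow hS.le (rpow_nonneg hB.le _), ← rpow_mul hB.le]
        have : 3 - s ≠ 0 := by linarith
        field_simp
    _ ≤ A ^ ((3 - s) / (2 - s)) :=
        rpow_le_rpow (by positivity) hSB (div_nonneg (by linarith) (by linarith))

theorem stmt17_general (s₁ s₂ lam A B C S₁ : ℝ) (h12 : s₁ < s₂) (hs₂ : s₂ < 2)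
    (hlam : lam ≤ 0) (hA : 0 < A) (hB : 0 < B) (hC : 0 ≤ C) (hS₁ : 0 < S₁)
    (hnehari : A = B + lam * C)
    (hSob : B ^ (1 / (3 - s₁)) ≤ S₁⁻¹ * A)
    (t₀ : ℝ) (ht₀ : t₀ = (A / B) ^ (1 / (4 - 2 * s₁))) :
    A / 2 - B / (6 - 2 * s₁) - lam * C / (6 - 2 * s₂)
        ≥ t₀ ^ 2 * A / 2 - t₀ ^ (6 - 2 * s₁) * B / (6 - 2 * s₁)
          - lam * t₀ ^ (6 - 2 * s₂) * C / (6 - 2 * s₂) ∧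
    t₀ ^ 2 * A / 2 - t₀ ^ (6 - 2 * s₁) * B / (6 - 2 * s₁)
        - lam * t₀ ^ (6 - 2 * s₂) * C / (6 - 2 * s₂)
      ≥ t₀ ^ 2 * A / 2 - t₀ ^ (6 - 2 * s₁) * B / (6 - 2 * s₁) ∧
    t₀ ^ 2 * A / 2 - t₀ ^ (6 - 2 * s₁) * B / (6 - 2 * s₁)
      = ((2 - s₁) / (6 - 2 * s₁)) * A ^ ((3 - s₁) / (2 - s₁)) / B ^ (1 / (2 - s₁)) ∧
    ((2 - s₁) / (6 - 2 * s₁)) * A ^ ((3 - s₁) / (2 - s₁)) / B ^ (1 / (2 - s₁))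
      ≥ ((2 - s₁) / (6 - 2 * s₁)) * S₁ ^ ((3 - s₁) / (2 - s₁)) := by
  have hs₁ : s₁ < 2 := h12.trans hs₂
  have ht₀_nonneg : 0 ≤ t₀ := ht₀ ▸ rpow_nonneg (div_pos hA hB).le _
  have hC_term : lam * t₀ ^ (6 - 2 * s₂) * C / (6 - 2 * s₂) ≤ 0 :=
    div_nonpos_of_nonpos_of_nonneg
      (mul_nonpos_of_nonpos_of_nonneg
        (mul_nonpos_of_nonpos_of_nonneg hlam (rpow_nonneg ht₀_nonneg _)) hC) (by linarith)
  refine ⟨nehari_fibering_le hA.le hB.le ht₀_nonneg (by linarith) (by linarith) hnehari,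
    by linarith, single_power_fibering_eq hA hB hs₁ ht₀, ?_⟩
  rw [mul_div_assoc]
  exact mul_le_mul_of_nonneg_left (rpow_le_of_sobolev hB hS₁ hs₁ hSob)
    (div_nonneg (by linarith) (by linarith))

/-- chained comparison: let `λ ≤ 0`, `0 < s₁ < s₂ < 2`, `A > 0`, `B > 0`,
`C ≥ 0`, `S₁ > 0` with the Nehari identity `A = B + λC` and the Sobolev bound
`B^{1/(3−s₁)} ≤ S₁⁻¹A`.  With `t₀ = (A/B)^{1/(4−2s₁)}`:
`I_λ(u_λ) ≥ I_λ(t₀u_λ) ≥ I_0(t₀u_λ) = ((2−s₁)/(6−2s₁))A^{(3−s₁)/(2−s₁)}/B^{1/(2−s₁)}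
≥ ((2−s₁)/(6−2s₁))S₁^{(3−s₁)/(2−s₁)}`. -/
theorem stmt17 (s₁ s₂ lam A B C S₁ : ℝ) (hs₁ : 0 < s₁) (h12 : s₁ < s₂) (hs₂ : s₂ < 2)
    (hlam : lam ≤ 0) (hA : 0 < A) (hB : 0 < B) (hC : 0 ≤ C) (hS₁ : 0 < S₁)
    (hnehari : A = B + lam * C)
    (hSob : B ^ (1 / (3 - s₁)) ≤ S₁⁻¹ * A)
    (t₀ : ℝ) (ht₀ : t₀ = (A / B) ^ (1 / (4 - 2 * s₁))) :
    A / 2 - B / (6 - 2 * s₁) - lam * C / (6 - 2 * s₂)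
        ≥ t₀ ^ 2 * A / 2 - t₀ ^ (6 - 2 * s₁) * B / (6 - 2 * s₁)
          - lam * t₀ ^ (6 - 2 * s₂) * C / (6 - 2 * s₂) ∧
    t₀ ^ 2 * A / 2 - t₀ ^ (6 - 2 * s₁) * B / (6 - 2 * s₁)
        - lam * t₀ ^ (6 - 2 * s₂) * C / (6 - 2 * s₂)
      ≥ t₀ ^ 2 * A / 2 - t₀ ^ (6 - 2 * s₁) * B / (6 - 2 * s₁) ∧
    t₀ ^ 2 * A / 2 - t₀ ^ (6 - 2 * s₁) * B / (6 - 2 * s₁)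
      = ((2 - s₁) / (6 - 2 * s₁)) * A ^ ((3 - s₁) / (2 - s₁)) / B ^ (1 / (2 - s₁)) ∧
    ((2 - s₁) / (6 - 2 * s₁)) * A ^ ((3 - s₁) / (2 - s₁)) / B ^ (1 / (2 - s₁))
      ≥ ((2 - s₁) / (6 - 2 * s₁)) * S₁ ^ ((3 - s₁) / (2 - s₁)) :=
  stmt17_general s₁ s₂ lam A B C S₁ h12 hs₂ hlam hA hB hC hS₁ hnehari hSob t₀ ht₀
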